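/- There exists a constant c > 0 such that for all ξ, η ∈ ℝ³ with 0 < |η| ≤ |ξ|/2, one has |Φ₁(ξ,η)| ≥ c·|η|·( θ² + |ξ|² / ((1+|η|²)(1+|ξ|²)) ), where θ ∈ [0,π] is the angle between ξ and η, i.e., cos θ = ⟨ξ,η⟩/(|ξ||η|). -/

import Mathlib

noncomputable def q (r : ℝ) : ℝ := Real.sqrt ((2 + r ^ 2) / (1 + r ^ 2))
noncomputable def p (r : ℝ) : ℝ := r * q r
noncomputable def Φ₁ (ξ η : EuclideanSpace ℝ (Fin 3)) : ℝ :=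
  p ‖ξ‖ - p ‖ξ - η‖ - p ‖η‖

/-!
With `a = ‖ξ‖`, `b = ‖η‖`, `s = ‖ξ - η‖` we have
`-Φ₁ ξ η = (p s - p (a - b)) + (p (a - b) + p b - p a)`, a sum of two nonnegative terms.
Since `p x - p y ≥ (x - y)/√2`, the first term is at least a multiple of
`s - (a - b) = 2ab (1 - cos θ)/(s + a - b) ≳ b θ²`. The second is the subadditivity defect of `p`.
Writing `ρ r = 1/(1 + r²)`, so that `q r ^ 2 = 1 + ρ r` and `p x ^ 2 - p y ^ 2 = (x² - y²)(1 + ρ x ρ y)`,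
the defect times `p a + p b` becomes an expression in `q` and `ρ` whose terms can be bounded
below one by one, using that `q` decreases.
-/

open InnerProductGeometry Real

noncomputable def japaneseInvSq (r : ℝ) : ℝ := (1 + r ^ 2)⁻¹

local notation "ρ" => japaneseInvSq

lemma japaneseInvSq_pos (r : ℝ) : 0 < ρ r := by unfold japaneseInvSq; positivity

lemma japaneseInvSq_le_one (r : ℝ) : ρ r ≤ 1 :=
  inv_le_one_of_one_le₀ (by nlinarith [sq_nonneg r])

lemma one_sub_japaneseInvSq (r : ℝ) : 1 - ρ r = r ^ 2 * ρ r := by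
  unfold japaneseInvSq; field_simp; ring

lemma q_sq (r : ℝ) : q r ^ 2 = 1 + ρ r := by
  rw [q, sq_sqrt (by positivity), japaneseInvSq]; field_simp; ring

lemma one_le_q (r : ℝ) : 1 ≤ q r :=
  one_le_sqrt.mpr (by rw [one_le_div (by positivity)]; linarith)

lemma q_le_sqrt_two (r : ℝ) : q r ≤ √2 :=
  sqrt_le_sqrt (by rw [div_le_iff₀ (by positivity)]; nlinarith [sq_nonneg r])

lemma q_antitoneOn : AntitoneOn q (Set.Ici 0) := fun x hx y _ hxy => by
  apply sqrt_le_sqrt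
  rw [div_le_div_iff₀ (by positivity) (by positivity)]
  nlinarith [mul_le_mul hxy hxy (Set.mem_Ici.mp hx) (le_trans hx hxy)]

lemma le_p {r : ℝ} (hr : 0 ≤ r) : r ≤ p r := le_mul_of_one_le_right hr (one_le_q r)

lemma p_le_sqrt_two_mul {r : ℝ} (hr : 0 ≤ r) : p r ≤ √2 * r := by
  rw [p, mul_comm]; exact mul_le_mul_of_nonneg_right (q_le_sqrt_two r) hr

lemma p_sq_sub_p_sq (x y : ℝ) :
    p x ^ 2 - p y ^ 2 = (x ^ 2 - y ^ 2) * (1 + ρ x * ρ y) := by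
  rw [p, p, mul_pow, mul_pow, q_sq, q_sq]
  linear_combination (ρ y - 1) * one_sub_japaneseInvSq x + (1 - ρ x) * one_sub_japaneseInvSq y

lemma sub_div_sqrt_two_le_p_sub_p {x y : ℝ} (hy : 0 ≤ y) (hxy : y ≤ x) :
    (x - y) / √2 ≤ p x - p y := by
  obtain rfl | hlt := hxy.eq_or_lt
  · simp
  have hx : 0 < x := hy.trans_lt hlt
  have hsum_pos : 0 < p x + p y := by linarith [le_p hx.le, le_p hy]
  have hsum_le : p x + p y ≤ √2 * (x + y) := by
    linarith [p_le_sqrt_two_mul hx.le, p_le_sqrt_two_mul hy]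
  have hsq : x ^ 2 - y ^ 2 ≤ p x ^ 2 - p y ^ 2 := by
    have hsq_nonneg : 0 ≤ x ^ 2 - y ^ 2 := by nlinarith
    rw [p_sq_sub_p_sq]
    nlinarith [mul_nonneg hsq_nonneg (mul_pos (japaneseInvSq_pos x) (japaneseInvSq_pos y)).le]
  rw [div_le_iff₀ (by positivity)]
  refine le_of_mul_le_mul_right ?_ hsum_pos
  calc (x - y) * (p x + p y) ≤ (x - y) * (√2 * (x + y)) := by gcongr
    _ = √2 * (x ^ 2 - y ^ 2) := by ring
    _ ≤ √2 * (p x ^ 2 - p y ^ 2) := by gcongr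
    _ = (p x - p y) * √2 * (p x + p y) := by ring

lemma japaneseInvSq_mul_sub_le_q_mul_q_sub (x y : ℝ) :
    ρ y * (1 - ρ x) / 4 ≤ q x * q y - (1 + ρ x * ρ y) := by
  have hρx := japaneseInvSq_pos x
  have hρy := japaneseInvSq_pos y
  have hρx1 := japaneseInvSq_le_one x
  have hρy1 := japaneseInvSq_le_one y
  have hqq_le : q x * q y ≤ 2 := by
    nlinarith [q_le_sqrt_two x, q_le_sqrt_two y, one_le_q x, sq_sqrt (zero_le_two : (0 : ℝ) ≤ 2)]
  -- `(q x q y)² - (1 + ρ x ρ y)² - ρ y (1 - ρ x) = ρ x (1 - ρ x ρ y²) ≥ 0`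
  have hsq : ρ y * (1 - ρ x) ≤ (q x * q y) ^ 2 - (1 + ρ x * ρ y) ^ 2 := by
    rw [mul_pow, q_sq, q_sq]
    nlinarith [mul_le_one₀ hρx1 (mul_pos hρy hρy).le (mul_le_one₀ hρy1 hρy.le hρy1)]
  have hqq_ge : 1 ≤ q x * q y := one_le_mul_of_one_le_of_one_le (one_le_q x) (one_le_q y)
  have hρρ : ρ x * ρ y ≤ 1 := mul_le_one₀ hρx1 hρy.le hρy1
  have hdiff : 0 ≤ q x * q y - (1 + ρ x * ρ y) := by
    nlinarith [mul_pos hρx hρy, mul_nonneg hρy.le (sub_nonneg.mpr hρx1)]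
  nlinarith [mul_le_mul_of_nonneg_left (show q x * q y + (1 + ρ x * ρ y) ≤ 4 by linarith) hdiff]

lemma p_add_p_sub_p_add_mul_eq (t b : ℝ) :
    (p t + p b - p (t + b)) * (p (t + b) + p b) =
      t * ((t + b) * (q t * q (t + b) - (1 + ρ (t + b) * ρ b)) +
        b * (q t * q b - (1 + ρ (t + b) * ρ b))) := by
  have h := p_sq_sub_p_sq (t + b) b
  simp only [p] at h ⊢
  linear_combination -h

lemma le_p_add_p_sub_p_add_mul {t b : ℝ} (ht : 0 ≤ t) (hb : 0 ≤ b) :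
    t * (b * (t + b) ^ 2 * ρ (t + b) * ρ b) / 4 ≤
      (p t + p b - p (t + b)) * (p (t + b) + p b) := by
  set a := t + b
  have ha : 0 ≤ a := by positivity
  have hq : q a ≤ q t := q_antitoneOn (Set.mem_Ici.mpr ht) (Set.mem_Ici.mpr ha)
    (le_add_of_nonneg_right hb)
  have hfirst : 0 ≤ q t * q a - (1 + ρ a * ρ b) := by
    nlinarith [q_sq a, mul_le_mul_of_nonneg_right hq (zero_le_one.trans (one_le_q a)),
      japaneseInvSq_pos a, japaneseInvSq_le_one b]
  have hsecond : ρ b * (a ^ 2 * ρ a) / 4 ≤ q t * q b - (1 + ρ a * ρ b) := by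
    rw [← one_sub_japaneseInvSq]
    nlinarith [japaneseInvSq_mul_sub_le_q_mul_q_sub a b,
      mul_le_mul_of_nonneg_right hq (zero_le_one.trans (one_le_q b))]
  rw [p_add_p_sub_p_add_mul_eq, mul_div_assoc]
  gcongr
  nlinarith [mul_le_mul_of_nonneg_left hsecond hb, mul_nonneg ha hfirst]

lemma le_p_add_p_sub_p_add {t b : ℝ} (hb : 0 < b) (hbt : b ≤ t) :
    b * (t + b) ^ 2 * ρ (t + b) * ρ b / (12 * √2) ≤ p t + p b - p (t + b) := by
  have ht : 0 < t := hb.trans_le hbt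
  set X := b * (t + b) ^ 2 * ρ (t + b) * ρ b
  have hX : 0 ≤ X := by have := japaneseInvSq_pos (t + b); have := japaneseInvSq_pos b; positivity
  have hS_pos : 0 < p (t + b) + p b := by linarith [le_p (by positivity : 0 ≤ t + b), le_p hb.le]
  have hS_le : p (t + b) + p b ≤ √2 * (3 * t) := by
    have : √2 * (t + 2 * b) ≤ √2 * (3 * t) := by gcongr; linarith
    linarith [p_le_sqrt_two_mul (by positivity : 0 ≤ t + b), p_le_sqrt_two_mul hb.le]
  refine le_of_mul_le_mul_right ?_ hS_pos
  calc X / (12 * √2) * (p (t + b) + p b) ≤ X / (12 * √2) * (√2 * (3 * t)) := by gcongr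
    _ = t * X / 4 := by field_simp; ring
    _ ≤ _ := le_p_add_p_sub_p_add_mul ht.le hb.le

lemma sq_div_five_le_one_sub_cos {x : ℝ} (hx : |x| ≤ π) : x ^ 2 / 5 ≤ 1 - cos x := by
  have hπ : π ^ 2 ≤ 10 := by nlinarith [pi_lt_d2, pi_pos]
  have : 1 / 5 ≤ 2 / π ^ 2 := by rw [div_le_div_iff₀ (by norm_num) (by positivity)]; linarith
  nlinarith [cos_le_one_sub_mul_cos_sq hx, sq_nonneg x]

lemma norm_mul_angle_sq_div_five_le {V : Type*} [NormedAddCommGroup V] [InnerProductSpace ℝ V]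
    {ξ : V} (η : V) (hξ : ξ ≠ 0) :
    ‖η‖ * angle ξ η ^ 2 / 5 ≤ ‖ξ - η‖ - (‖ξ‖ - ‖η‖) := by
  have ha : 0 < ‖ξ‖ := norm_pos_iff.mpr hξ
  have hcos := sq_div_five_le_one_sub_cos
    (abs_le.mpr ⟨by linarith [angle_nonneg ξ η, pi_pos], angle_le_pi ξ η⟩)
  have hlaw := norm_sub_sq_eq_norm_sq_add_norm_sq_sub_two_mul_norm_mul_norm_mul_cos_angle ξ η
  have hd : 0 ≤ ‖ξ - η‖ - (‖ξ‖ - ‖η‖) := by linarith [norm_sub_norm_le ξ η]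
  have hsum : ‖ξ - η‖ + (‖ξ‖ - ‖η‖) ≤ 2 * ‖ξ‖ := by linarith [norm_sub_le ξ η]
  -- `s² - (a - b)² = 2ab (1 - cos θ)`, and `s + (a - b) ≤ 2a`
  refine le_of_mul_le_mul_right ?_ (by positivity : 0 < 2 * ‖ξ‖)
  nlinarith [mul_le_mul_of_nonneg_left hsum hd, mul_le_mul_of_nonneg_left hcos
    (by positivity : 0 ≤ 2 * ‖ξ‖ * ‖η‖)]

theorem stmt12 :
    ∃ c : ℝ, 0 < c ∧
      ∀ ξ η : EuclideanSpace ℝ (Fin 3), 0 < ‖η‖ → ‖η‖ ≤ ‖ξ‖ / 2 →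
        c * (‖η‖ * (InnerProductGeometry.angle ξ η ^ 2 +
            ‖ξ‖ ^ 2 / ((1 + ‖η‖ ^ 2) * (1 + ‖ξ‖ ^ 2)))) ≤ |Φ₁ ξ η| := by
  refine ⟨1 / (12 * √2), by positivity, fun ξ η hη hηξ => ?_⟩
  have hξ : ξ ≠ 0 := norm_pos_iff.mp (by linarith)
  set a := ‖ξ‖
  set b := ‖η‖
  set θ := angle ξ η
  have hfirst : b * θ ^ 2 / (12 * √2) ≤ p ‖ξ - η‖ - p (a - b) :=
    calc b * θ ^ 2 / (12 * √2) ≤ b * θ ^ 2 / 5 / √2 := by rw [div_div]; gcongr; linarith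
      _ ≤ (‖ξ - η‖ - (a - b)) / √2 := by gcongr; exact norm_mul_angle_sq_div_five_le η hξ
      _ ≤ _ := sub_div_sqrt_two_le_p_sub_p (by linarith) (by linarith [norm_sub_norm_le ξ η])
  have hsecond : b * a ^ 2 * ρ a * ρ b / (12 * √2) ≤ p (a - b) + p b - p a := by
    simpa using le_p_add_p_sub_p_add hη (show b ≤ a - b by linarith)
  have hρ : a ^ 2 / ((1 + b ^ 2) * (1 + a ^ 2)) = a ^ 2 * ρ a * ρ b := by
    simp only [japaneseInvSq]; field_simp
  have hΦ : -Φ₁ ξ η = (p ‖ξ - η‖ - p (a - b)) + (p (a - b) + p b - p a) := by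
    unfold Φ₁; ring
  have hlower_nonneg : 0 ≤ b * a ^ 2 * ρ a * ρ b / (12 * √2) := by
    have := japaneseInvSq_pos a; have := japaneseInvSq_pos b; positivity
  rw [abs_of_nonpos (by linarith [show 0 ≤ b * θ ^ 2 / (12 * √2) by positivity]), hΦ, hρ]
  linarith [show 1 / (12 * √2) * (b * (θ ^ 2 + a ^ 2 * ρ a * ρ b)) =
    b * θ ^ 2 / (12 * √2) + b * a ^ 2 * ρ a * ρ b / (12 * √2) by ring]
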